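/- (Interior touching principle) Let B ⊆ ℝⁿ be open and connected and let L(w) = Σ_{i,j} a_{ij}(x) w_{ij} + Σ_i b_i(x) w_i + c(x) w, where a_{ij} = a_{ji}, b_i, c are continuous on B and the matrix (a_{ij}(x)) is positive definite for every x ∈ B. Suppose w ∈ C²(B) satisfies L(w) ≥ 0 on B, w ≤ 0 on B, and w(x₀) = 0 for some x₀ ∈ B. Then w ≡ 0 on B. -/

import Mathlib

/-!
Hopf's argument. If `w` vanished somewhere in `B` without vanishing identically, connectedness
would give a ball `B(y, r) ⊆ B` on which `w < 0`, touching the zero set of `w` at a boundary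
point `z` (a zero of `w` nearest to `y`). After lowering `c` to `min c 0`, which keeps `L w ≥ 0`
since `w ≤ 0`, the barrier `h = exp (-α |x - y|²) - exp (-α r²)` satisfies `L h > 0` on the
annulus `r/2 ≤ |x - y| ≤ r` for large `α`: ellipticity makes `4 α² ∑ aᵢⱼ (x - y)ᵢ (x - y)ⱼ`
dominate. At an interior maximum of `w + ε h` where it is positive, the gradient vanishes and the
Hessian is negative semidefinite, so `L (w + ε h) ≤ 0` there; hence `w + ε h ≤ 0` on the annulus
for a suitable `ε > 0`. As `w + ε h` vanishes at `z`, its inward normal derivative at `z` is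
`≤ 0`, which forces `∂w/∂ν (z) > 0`: impossible at the interior maximum `z` of `w`.
-/

/-- Partial derivative `∂f/∂x_i` at `x`. -/
noncomputable def pd {n : ℕ} (f : EuclideanSpace ℝ (Fin n) → ℝ) (i : Fin n)
    (x : EuclideanSpace ℝ (Fin n)) : ℝ :=
  fderiv ℝ f x (EuclideanSpace.single i 1)

/-- Second partial derivative `∂²f/∂x_i∂x_j` at `x`. -/
noncomputable def pd2 {n : ℕ} (f : EuclideanSpace ℝ (Fin n) → ℝ) (i j : Fin n)
    (x : EuclideanSpace ℝ (Fin n)) : ℝ :=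
  pd (fun y => pd f i y) j x

open Set Filter Topology Metric
open scoped RealInnerProductSpace

section SecondDerivative

variable {F : Type*} [NormedAddCommGroup F] [NormedSpace ℝ F]

theorem ContDiffAt.differentiableAt_fderiv {f : F → ℝ} {x : F} (hf : ContDiffAt ℝ 2 f x) :
    DifferentiableAt ℝ (fderiv ℝ f) x :=
  (hf.fderiv_right (m := 1) le_rfl).differentiableAt one_ne_zero

theorem fderiv_fderiv_add_smul {f g : F → ℝ} {x : F} (hf : ContDiffAt ℝ 2 f x)
    (hg : ContDiffAt ℝ 2 g x) (ε : ℝ) :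
    fderiv ℝ (fderiv ℝ (f + ε • g)) x =
      fderiv ℝ (fderiv ℝ f) x + ε • fderiv ℝ (fderiv ℝ g) x := by
  have hfg : fderiv ℝ (f + ε • g) =ᶠ[𝓝 x] fderiv ℝ f + ε • fderiv ℝ g := by
    filter_upwards [hf.eventually (by simp), hg.eventually (by simp)] with y hfy hgy
    rw [fderiv_add (hfy.differentiableAt two_ne_zero)
      ((hgy.differentiableAt two_ne_zero).const_smul ε),
      fderiv_const_smul (hgy.differentiableAt two_ne_zero)]
    rfl
  rw [hfg.fderiv_eq, fderiv_add hf.differentiableAt_fderiv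
    (hg.differentiableAt_fderiv.const_smul ε), fderiv_const_smul hg.differentiableAt_fderiv]

theorem IsLocalMax.deriv_deriv_nonpos {g : ℝ → ℝ} {t : ℝ} (h : IsLocalMax g t)
    (hg : ContinuousAt g t) : deriv (deriv g) t ≤ 0 := by
  by_contra! hpos
  -- a positive second derivative would make `t` also a local minimum, so `g` is locally constant
  have hmin : IsLocalMin g t := isLocalMin_of_deriv_deriv_pos hpos h.deriv_eq_zero hg
  have hconst : g =ᶠ[𝓝 t] fun _ => g t := by
    filter_upwards [hmin, h] with s hs hs' using le_antisymm hs' hs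
  have hzero : deriv (deriv g) t = 0 := by
    rw [hconst.deriv.deriv_eq]
    simp
  exact hpos.ne' hzero

theorem IsLocalMax.fderiv_fderiv_apply_self_nonpos {f : F → ℝ} {q : F} (h : IsLocalMax f q)
    (hf : ContDiffAt ℝ 2 f q) (u : F) : fderiv ℝ (fderiv ℝ f) q u u ≤ 0 := by
  have hline : ∀ t : ℝ, HasDerivAt (fun s : ℝ => q + s • u) u t := fun t => by
    simpa using ((hasDerivAt_id t).smul_const u).const_add q
  have hmax : IsLocalMax (fun s : ℝ => f (q + s • u)) 0 :=
    IsLocalMax.comp_continuous (g := fun s : ℝ => q + s • u) (by simpa using h)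
      (hline 0).continuousAt
  have hderiv : deriv (fun s : ℝ => f (q + s • u)) =ᶠ[𝓝 0]
      fun s => fderiv ℝ f (q + s • u) u := by
    have hdiff : ∀ᶠ y in 𝓝 q, DifferentiableAt ℝ f y :=
      (hf.eventually (by simp)).mono fun y hy => hy.differentiableAt (by simp)
    filter_upwards [(hline 0).continuousAt.eventually (by simpa using hdiff)] with s hs
    exact (hs.hasFDerivAt.comp_hasDerivAt s (hline s)).deriv
  have hderiv2 : HasDerivAt (fun s : ℝ => fderiv ℝ f (q + s • u) u)
      (fderiv ℝ (fderiv ℝ f) q u u) 0 := by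
    have hcomp := hf.differentiableAt_fderiv.hasFDerivAt.comp_hasDerivAt_of_eq 0 (hline 0)
      (by simp)
    simpa using hcomp.clm_apply (hasDerivAt_const (0 : ℝ) u)
  rw [← hderiv.deriv_eq.trans hderiv2.deriv]
  exact hmax.deriv_deriv_nonpos (hf.continuousAt.comp_of_eq (hline 0).continuousAt (by simp))

end SecondDerivative

open scoped Matrix MatrixOrder in
theorem Matrix.PosSemidef.sum_mul_nonpos {ι : Type*} [Fintype ι] {A H : Matrix ι ι ℝ}
    (hA : A.PosSemidef) (hH : ∀ u, u ⬝ᵥ H *ᵥ u ≤ 0) :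
    ∑ i, ∑ j, A i j * H i j ≤ 0 := by
  classical
  -- with `A = Rᴴ R`, the sum is that of the quadratic forms of `H` at the rows of `R`
  obtain ⟨R, rfl⟩ := CStarAlgebra.nonneg_iff_eq_star_mul_self.mp hA.nonneg
  calc ∑ i, ∑ j, (star R * R) i j * H i j = ∑ k, R k ⬝ᵥ H *ᵥ R k := by
        simp only [Matrix.mul_apply, Matrix.star_apply, star_trivial, dotProduct, Matrix.mulVec,
          Finset.sum_mul, Finset.mul_sum]
        refine (Finset.sum_congr rfl fun y _ => Finset.sum_comm).trans ?_
        rw [Finset.sum_comm]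
        exact Finset.sum_congr rfl fun k _ => Finset.sum_congr rfl fun x _ =>
          Finset.sum_congr rfl fun y _ => by ring
    _ ≤ 0 := Finset.sum_nonpos fun k _ => hH (R k)

theorem IsCompact.nonpos_of_isLocalMax {X : Type*} [TopologicalSpace X] {K U : Set X}
    {v : X → ℝ} (hK : IsCompact K) (hv : ContinuousOn v K) (hU : IsOpen U) (hUK : U ⊆ K)
    (hbdry : ∀ x ∈ K \ U, v x ≤ 0) (hmax : ∀ q ∈ U, IsLocalMax v q → v q ≤ 0) :
    ∀ x ∈ K, v x ≤ 0 := by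
  intro x hx
  obtain ⟨q, hqK, hq⟩ := hK.exists_isMaxOn ⟨x, hx⟩ hv
  refine (hq hx).trans ?_
  by_cases hqU : q ∈ U
  · exact hmax q hqU (Filter.mem_of_superset (hU.mem_nhds hqU) fun y hy => hq (hUK hy))
  · exact hbdry q ⟨hqK, hqU⟩

theorem EuclideanSpace.clm_apply_eq_sum_single {ι G : Type*} [Fintype ι] [DecidableEq ι]
    [AddCommGroup G] [Module ℝ G] [TopologicalSpace G] (L : EuclideanSpace ℝ ι →L[ℝ] G)
    (u : EuclideanSpace ℝ ι) : L u = ∑ i, u i • L (EuclideanSpace.single i 1) := by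
  conv_lhs => rw [← (EuclideanSpace.basisFun ι ℝ).sum_repr u]
  simp

section EllipticOperator

variable {n : ℕ}

local notation:max "ℝ^" n:max => EuclideanSpace ℝ (Fin n)

variable {a : Fin n → Fin n → ℝ^n → ℝ} {b : Fin n → ℝ^n → ℝ} {c : ℝ^n → ℝ}

theorem pd2_eq_fderiv_fderiv {f : ℝ^n → ℝ} {x : ℝ^n}
    (hf : DifferentiableAt ℝ (fderiv ℝ f) x) (i j : Fin n) :
    pd2 f i j x =
      fderiv ℝ (fderiv ℝ f) x (EuclideanSpace.single j 1) (EuclideanSpace.single i 1) := by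
  simp [pd2, pd, fderiv_clm_apply hf (differentiableAt_const _)]

theorem sum_pd2_mul_mul_eq_fderiv_fderiv {f : ℝ^n → ℝ} {x : ℝ^n}
    (hf : DifferentiableAt ℝ (fderiv ℝ f) x) (u : ℝ^n) :
    ∑ i, ∑ j, pd2 f i j x * u i * u j = fderiv ℝ (fderiv ℝ f) x u u := by
  rw [EuclideanSpace.clm_apply_eq_sum_single (fderiv ℝ (fderiv ℝ f) x), Finset.sum_comm,
    sum_apply]
  refine Finset.sum_congr rfl fun j _ => ?_
  rw [smul_apply, EuclideanSpace.clm_apply_eq_sum_single (fderiv ℝ (fderiv ℝ f) x _),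
    smul_eq_mul, Finset.mul_sum]
  refine Finset.sum_congr rfl fun i _ => ?_
  rw [pd2_eq_fderiv_fderiv hf, smul_eq_mul]
  ring

structure IsEllipticOn (a : Fin n → Fin n → ℝ^n → ℝ) (S : Set ℝ^n) : Prop where
  symm : ∀ i j, ∀ x ∈ S, a i j x = a j i x
  pos : ∀ x ∈ S, ∀ ξ : ℝ^n, ξ ≠ 0 → 0 < ∑ i, ∑ j, a i j x * ξ i * ξ j

theorem IsEllipticOn.mono {S T : Set ℝ^n} (h : IsEllipticOn a S) (hTS : T ⊆ S) :
    IsEllipticOn a T :=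
  ⟨fun i j x hx => h.symm i j x (hTS hx), fun x hx => h.pos x (hTS hx)⟩

theorem IsEllipticOn.posSemidef {S : Set ℝ^n} (h : IsEllipticOn a S) {x : ℝ^n} (hx : x ∈ S) :
    (Matrix.of fun i j => a i j x).PosSemidef := by
  refine .of_dotProduct_mulVec_nonneg ?_ fun u => ?_
  · ext i j
    exact h.symm j i x hx
  · rcases eq_or_ne u 0 with rfl | hu
    · simp
    · have hpos := h.pos x hx (WithLp.toLp 2 u) (by simpa using hu)
      simp only [dotProduct, Matrix.mulVec, star_trivial, Matrix.of_apply, Finset.mul_sum]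
      refine hpos.le.trans_eq
        (Finset.sum_congr rfl fun i _ => Finset.sum_congr rfl fun j _ => ?_)
      ring

noncomputable def ellipticOp (a : Fin n → Fin n → ℝ^n → ℝ) (b : Fin n → ℝ^n → ℝ)
    (c : ℝ^n → ℝ) (f : ℝ^n → ℝ) (x : ℝ^n) : ℝ :=
  ∑ i, ∑ j, a i j x * pd2 f i j x + ∑ i, b i x * pd f i x + c x * f x

theorem ellipticOp_add_smul {f g : ℝ^n → ℝ} {x : ℝ^n} (hf : ContDiffAt ℝ 2 f x)
    (hg : ContDiffAt ℝ 2 g x) (ε : ℝ) :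
    ellipticOp a b c (f + ε • g) x = ellipticOp a b c f x + ε * ellipticOp a b c g x := by
  have hpd : ∀ i, pd (f + ε • g) i x = pd f i x + ε * pd g i x := fun i => by
    simp [pd, fderiv_add (hf.differentiableAt two_ne_zero)
      ((hg.differentiableAt two_ne_zero).const_smul ε),
      fderiv_const_smul (hg.differentiableAt two_ne_zero)]
  have hpd2 : ∀ i j, pd2 (f + ε • g) i j x = pd2 f i j x + ε * pd2 g i j x := fun i j => by
    have hfg : ContDiffAt ℝ 2 (f + ε • g) x := hf.add (hg.const_smul ε)
    rw [pd2_eq_fderiv_fderiv hfg.differentiableAt_fderiv, fderiv_fderiv_add_smul hf hg,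
      pd2_eq_fderiv_fderiv hf.differentiableAt_fderiv,
      pd2_eq_fderiv_fderiv hg.differentiableAt_fderiv]
    rfl
  simp only [ellipticOp, hpd, hpd2, Pi.add_apply, Pi.smul_apply, smul_eq_mul, mul_add,
    Finset.sum_add_distrib, Finset.mul_sum, mul_left_comm _ ε]
  ring

theorem ellipticOp_nonpos_of_isLocalMax {S : Set ℝ^n} (ha : IsEllipticOn a S) {v : ℝ^n → ℝ}
    {q : ℝ^n} (hq : q ∈ S) (hmax : IsLocalMax v q) (hv : ContDiffAt ℝ 2 v q) (hc : c q ≤ 0)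
    (hvq : 0 ≤ v q) : ellipticOp a b c v q ≤ 0 := by
  have hgrad : ∀ i, pd v i q = 0 := fun i => by simp [pd, hmax.fderiv_eq_zero]
  have hhess : ∑ i, ∑ j, a i j q * pd2 v i j q ≤ 0 := by
    refine (ha.posSemidef hq).sum_mul_nonpos (H := Matrix.of fun i j => pd2 v i j q) fun u => ?_
    have hneg := hmax.fderiv_fderiv_apply_self_nonpos hv (WithLp.toLp 2 u)
    rw [← sum_pd2_mul_mul_eq_fderiv_fderiv hv.differentiableAt_fderiv] at hneg
    refine le_of_eq_of_le ?_ hneg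
    simp only [dotProduct, Matrix.mulVec, Matrix.of_apply, Finset.mul_sum]
    exact Finset.sum_congr rfl fun i _ => Finset.sum_congr rfl fun j _ => by ring
  simp only [ellipticOp, hgrad, mul_zero, Finset.sum_const_zero, add_zero]
  nlinarith [mul_nonpos_of_nonpos_of_nonneg hc hvq]

noncomputable def barrier (p : ℝ^n) (α r : ℝ) (x : ℝ^n) : ℝ :=
  Real.exp (-α * ‖x - p‖ ^ 2) - Real.exp (-α * r ^ 2)

section Barrier

variable (p : ℝ^n) (α r : ℝ)

theorem hasFDerivAt_exp_neg_mul_norm_sub_sq (x : ℝ^n) :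
    HasFDerivAt (fun y => Real.exp (-α * ‖y - p‖ ^ 2))
      ((-2 * α * Real.exp (-α * ‖x - p‖ ^ 2)) • innerSL ℝ (x - p)) x := by
  refine (((hasFDerivAt_id x).sub_const p).norm_sq.const_mul (-α)).exp.congr_fderiv ?_
  ext y
  simp
  ring

theorem hasFDerivAt_barrier (x : ℝ^n) :
    HasFDerivAt (barrier p α r)
      ((-2 * α * Real.exp (-α * ‖x - p‖ ^ 2)) • innerSL ℝ (x - p)) x :=
  (hasFDerivAt_exp_neg_mul_norm_sub_sq p α x).sub_const _

theorem contDiff_barrier : ContDiff ℝ 2 (barrier p α r) :=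
  ((contDiff_const.mul ((contDiff_norm_sq ℝ).comp (contDiff_id.sub contDiff_const))).exp).sub
    contDiff_const

theorem pd_barrier (i : Fin n) (x : ℝ^n) :
    pd (barrier p α r) i x = -2 * α * (x - p) i * Real.exp (-α * ‖x - p‖ ^ 2) := by
  simp [pd, (hasFDerivAt_barrier p α r x).fderiv, EuclideanSpace.inner_single_right]
  ring

theorem pd2_barrier (i j : Fin n) (x : ℝ^n) :
    pd2 (barrier p α r) i j x =
      (4 * α ^ 2 * (x - p) i * (x - p) j - if i = j then 2 * α else 0) *
        Real.exp (-α * ‖x - p‖ ^ 2) := by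
  have hcoord : HasFDerivAt (fun y : ℝ^n => -2 * α * (y - p) i)
      ((-2 * α) • EuclideanSpace.proj i) x :=
    (((EuclideanSpace.proj i : ℝ^n →L[ℝ] ℝ).hasFDerivAt (x := x)).sub_const (p i)).const_mul
      (-2 * α)
  have h := hcoord.fun_mul (hasFDerivAt_exp_neg_mul_norm_sub_sq p α x)
  rw [pd2, show pd (barrier p α r) i = _ from funext (pd_barrier p α r i), pd, h.fderiv]
  simp [EuclideanSpace.inner_single_right]
  split_ifs <;> ring

theorem ellipticOp_barrier (x : ℝ^n) :
    ellipticOp a b c (barrier p α r) x =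
      Real.exp (-α * ‖x - p‖ ^ 2) * (4 * α ^ 2 * ∑ i, ∑ j, a i j x * (x - p) i * (x - p) j
        - 2 * α * (∑ i, a i i x + ∑ i, b i x * (x - p) i)) + c x * barrier p α r x := by
  set E := Real.exp (-α * ‖x - p‖ ^ 2)
  have hsecond : ∀ i j, a i j x * pd2 (barrier p α r) i j x =
      E * (4 * α ^ 2) * (a i j x * (x - p) i * (x - p) j) -
        if i = j then E * (2 * α) * a i i x else 0 := by
    intro i j
    rw [pd2_barrier]
    split_ifs with hij
    · subst hij
      ring
    · ring
  have hfirst : ∀ i, b i x * pd (barrier p α r) i x = -(E * (2 * α) * (b i x * (x - p) i)) := by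
    intro i
    rw [pd_barrier]
    ring
  simp only [ellipticOp, hsecond, hfirst, Finset.sum_sub_distrib, Finset.sum_ite_eq,
    Finset.mem_univ, if_true, Finset.sum_neg_distrib, ← Finset.mul_sum]
  ring

end Barrier

theorem barrier_le_one {p x : ℝ^n} {α : ℝ} (hα : 0 ≤ α) (r : ℝ) :
    barrier p α r x ≤ 1 := by
  have := Real.exp_le_one_iff.2 (by nlinarith : -α * ‖x - p‖ ^ 2 ≤ 0)
  rw [barrier]
  linarith [Real.exp_pos (-α * r ^ 2)]

theorem barrier_of_dist_eq {p x : ℝ^n} {r : ℝ} (α : ℝ) (hx : dist x p = r) :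
    barrier p α r x = 0 := by
  simp [barrier, ← dist_eq_norm, hx]

theorem exists_ellipticOp_barrier_pos {K : Set ℝ^n} (hK : IsCompact K) {p : ℝ^n} (hpK : p ∉ K)
    (ha : IsEllipticOn a K) (ha_cont : ∀ i j, ContinuousOn (a i j) K)
    (hb_cont : ∀ i, ContinuousOn (b i) K) (hc_cont : ContinuousOn c K)
    (hc : ∀ x ∈ K, c x ≤ 0) (r : ℝ) :
    ∃ α > 0, ∀ x ∈ K, 0 < ellipticOp a b c (barrier p α r) x := by
  have hcoord : ∀ i, ContinuousOn (fun x : ℝ^n => (x - p) i) K := fun i =>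
    ((EuclideanSpace.proj i : ℝ^n →L[ℝ] ℝ).continuous.comp
      (continuous_id.sub continuous_const)).continuousOn
  obtain ⟨l, hl, hS⟩ := hK.exists_forall_le'
    (f := fun x => ∑ i, ∑ j, a i j x * (x - p) i * (x - p) j)
    (continuousOn_finsetSum _ fun i _ => continuousOn_finsetSum _ fun j _ =>
      ((ha_cont i j).mul (hcoord i)).mul (hcoord j))
    fun x hx => ha.pos x hx (x - p) (sub_ne_zero.2 (ne_of_mem_of_not_mem hx hpK))
  obtain ⟨M, hM⟩ := hK.exists_bound_of_continuousOn
    (f := fun x => ∑ i, a i i x + ∑ i, b i x * (x - p) i)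
    ((continuousOn_finsetSum _ fun i _ => ha_cont i i).add
      (continuousOn_finsetSum _ fun i _ => (hb_cont i).mul (hcoord i)))
  obtain ⟨C, hC⟩ := hK.exists_bound_of_continuousOn hc_cont
  set α := 1 + (|M| + |C|) / l
  have hα : α * l = l + |M| + |C| := by
    rw [add_mul, one_mul, div_mul_cancel₀ _ hl.ne', add_assoc]
  have hα1 : 1 ≤ α := le_add_of_nonneg_right (by positivity)
  refine ⟨α, by positivity, fun x hx => ?_⟩
  have hSx := hS x hx
  have hTx := (abs_le.1 (hM x hx)).2.trans (le_abs_self M)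
  have hcx := (neg_le_neg (le_abs_self C)).trans (abs_le.1 (hC x hx)).1
  have hbar : c x * Real.exp (-α * ‖x - p‖ ^ 2) ≤ c x * barrier p α r x :=
    mul_le_mul_of_nonpos_left (sub_le_self _ (Real.exp_pos _).le) (hc x hx)
  have hquad : 0 < 4 * α ^ 2 * (∑ i, ∑ j, a i j x * (x - p) i * (x - p) j)
      - 2 * α * (∑ i, a i i x + ∑ i, b i x * (x - p) i) + c x := by
    have h4 : 4 * α ^ 2 * l ≤ 4 * α ^ 2 * (∑ i, ∑ j, a i j x * (x - p) i * (x - p) j) :=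
      mul_le_mul_of_nonneg_left hSx (by positivity)
    nlinarith [abs_nonneg M, abs_nonneg C]
  rw [ellipticOp_barrier]
  nlinarith [mul_pos (Real.exp_pos (-α * ‖x - p‖ ^ 2)) hquad]

theorem add_smul_barrier_nonpos {w : ℝ^n → ℝ} {p : ℝ^n} {r α m : ℝ} (hα : 0 ≤ α)
    (hm : 0 < m)
    (ha : IsEllipticOn a (closedBall p r)) (hc : ∀ x ∈ closedBall p r, c x ≤ 0)
    (hw : ∀ x ∈ closedBall p r, ContDiffAt ℝ 2 w x)
    (hLw : ∀ x ∈ ball p r, 0 ≤ ellipticOp a b c w x)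
    (hLh : ∀ x ∈ closedBall p r \ ball p (r / 2), 0 < ellipticOp a b c (barrier p α r) x)
    (hw_le : ∀ x ∈ closedBall p r, w x ≤ 0) (hwm : ∀ x ∈ sphere p (r / 2), w x ≤ -m) :
    ∀ x ∈ closedBall p r \ ball p (r / 2), (w + m • barrier p α r) x ≤ 0 := by
  have hv : ∀ x ∈ closedBall p r, ContDiffAt ℝ 2 (w + m • barrier p α r) x := fun x hx =>
    (hw x hx).add ((contDiff_barrier p α r).contDiffAt.const_smul m)
  refine ((isCompact_closedBall p r).diff isOpen_ball).nonpos_of_isLocalMax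
    (fun x hx => (hv x hx.1).continuousAt.continuousWithinAt)
    (isOpen_ball.sdiff isClosed_closedBall) (U := ball p r \ closedBall p (r / 2))
    (sdiff_subset_sdiff ball_subset_closedBall ball_subset_closedBall) ?_ ?_
  · rintro x ⟨⟨hxr, hxr2⟩, hxU⟩
    rw [mem_closedBall] at hxr
    rw [mem_ball, not_lt] at hxr2
    rcases hxr.lt_or_eq with hlt | heq
    · have hxs : x ∈ sphere p (r / 2) := le_antisymm
        (not_lt.1 fun h => hxU ⟨mem_ball.2 hlt, fun h' => (mem_closedBall.1 h').not_gt h⟩) hxr2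
      simp only [Pi.add_apply, Pi.smul_apply, smul_eq_mul]
      nlinarith [hwm x hxs, barrier_le_one (p := p) (x := x) hα r]
    · simp [barrier_of_dist_eq α heq, hw_le x (mem_closedBall.2 heq.le)]
  · intro q hq hqmax
    by_contra! hpos
    have hqr : q ∈ closedBall p r := ball_subset_closedBall hq.1
    have hLv := ellipticOp_nonpos_of_isLocalMax (b := b) ha hqr hqmax (hv q hqr) (hc q hqr)
      hpos.le
    rw [ellipticOp_add_smul (hw q hqr) (contDiff_barrier p α r).contDiffAt] at hLv
    nlinarith [hLw q hq.1, hLh q ⟨hqr, fun h => hq.2 (ball_subset_closedBall h)⟩]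

theorem hopf_lemma {w : ℝ^n → ℝ} {p z : ℝ^n} {r : ℝ} (hr : 0 < r)
    (ha : IsEllipticOn a (closedBall p r))
    (ha_cont : ∀ i j, ContinuousOn (a i j) (closedBall p r))
    (hb_cont : ∀ i, ContinuousOn (b i) (closedBall p r))
    (hc_cont : ContinuousOn c (closedBall p r)) (hc : ∀ x ∈ closedBall p r, c x ≤ 0)
    (hw : ∀ x ∈ closedBall p r, ContDiffAt ℝ 2 w x)
    (hLw : ∀ x ∈ ball p r, 0 ≤ ellipticOp a b c w x)
    (hw_le : ∀ x ∈ closedBall p r, w x ≤ 0) (hw_neg : ∀ x ∈ ball p r, w x < 0)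
    (hz : dist z p = r) (hwz : w z = 0) :
    0 < fderiv ℝ w z (z - p) := by
  set K := closedBall p r \ ball p (r / 2)
  have hKr : K ⊆ closedBall p r := sdiff_subset
  have hzr : z ∈ closedBall p r := mem_closedBall.2 hz.le
  obtain ⟨α, hα, hLh⟩ := exists_ellipticOp_barrier_pos
    ((isCompact_closedBall p r).diff isOpen_ball) (fun h => h.2 (mem_ball_self (half_pos hr)))
    (ha.mono hKr) (fun i j => (ha_cont i j).mono hKr) (fun i => (hb_cont i).mono hKr)
    (hc_cont.mono hKr) (fun x hx => hc x (hKr hx)) r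
  have hsphere : sphere p (r / 2) ⊆ closedBall p r :=
    (sphere_subset_ball (by linarith)).trans ball_subset_closedBall
  obtain ⟨m, hm, hwm⟩ := (isCompact_sphere p (r / 2)).exists_forall_le' (f := fun x => -w x)
    (ContinuousOn.neg fun x hx => (hw x (hsphere hx)).continuousAt.continuousWithinAt)
    fun x hx => neg_pos.2 (hw_neg x (sphere_subset_ball (by linarith) hx))
  have hvK := add_smul_barrier_nonpos hα.le hm ha hc hw hLw hLh hw_le
    fun x hx => le_neg_of_le_neg (hwm x hx)
  have hloc : IsLocalMaxOn (w + m • barrier p α r) (closedBall p r) z := by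
    filter_upwards [self_mem_nhdsWithin,
      mem_nhdsWithin_of_mem_nhds (ball_mem_nhds z (half_pos hr))] with y hy hyz
    have hvz : (w + m • barrier p α r) z = 0 := by simp [hwz, barrier_of_dist_eq α hz]
    refine hvz ▸ hvK y ⟨hy, ?_⟩
    rw [mem_ball, not_lt]
    rw [mem_ball] at hyz
    linarith [dist_triangle z y p, dist_comm y z]
  have hcone : p - z ∈ posTangentConeAt (closedBall p r) z :=
    sub_mem_posTangentConeAt_of_segment_subset
      ((convex_closedBall p r).segment_subset hzr (mem_closedBall_self hr.le))
  have hderiv := ((hw z hzr).differentiableAt two_ne_zero).hasFDerivAt.add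
    ((hasFDerivAt_barrier p α r z).const_smul m)
  have hnonpos := hloc.hasFDerivWithinAt_nonpos hderiv.hasFDerivWithinAt hcone
  have hinner : ⟪z - p, p - z⟫ = -r ^ 2 := by
    rw [← neg_sub, inner_neg_left, real_inner_self_eq_norm_sq, ← dist_eq_norm, dist_comm, hz]
  have hflip : fderiv ℝ w z (p - z) = -fderiv ℝ w z (z - p) := by rw [← map_neg, neg_sub]
  simp only [add_apply, smul_apply, innerSL_apply_apply, smul_eq_mul, hinner, hflip] at hnonpos
  nlinarith [mul_pos (mul_pos hm hα)
    (mul_pos (Real.exp_pos (-α * ‖z - p‖ ^ 2)) (pow_pos hr 2))]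

theorem eventually_eq_zero_of_eq_zero {w : ℝ^n → ℝ} {B : Set ℝ^n} (hB : IsOpen B)
    (ha : IsEllipticOn a B) (ha_cont : ∀ i j, ContinuousOn (a i j) B)
    (hb_cont : ∀ i, ContinuousOn (b i) B) (hc_cont : ContinuousOn c B)
    (hc : ∀ x ∈ B, c x ≤ 0) (hw : ContDiffOn ℝ 2 w B) (hLw : ∀ x ∈ B, 0 ≤ ellipticOp a b c w x)
    (hw_le : ∀ x ∈ B, w x ≤ 0) {z : ℝ^n} (hz : z ∈ B) (hwz : w z = 0) :
    ∀ᶠ y in 𝓝 z, w y = 0 := by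
  obtain ⟨R, hR, hRB⟩ := Metric.isOpen_iff.1 hB z hz
  filter_upwards [ball_mem_nhds z (half_pos hR)] with y hy
  by_contra hwy
  set ρ := dist z y
  have hρB : closedBall y ρ ⊆ B := fun x hx => hRB <| by
    rw [mem_ball] at hy ⊢
    rw [mem_closedBall] at hx
    linarith [dist_triangle x y z, dist_comm z y]
  have hwy_neg : w y < 0 := (hw_le y (hρB (mem_closedBall_self dist_nonneg))).lt_of_ne hwy
  have hZ : IsCompact (closedBall y ρ ∩ w ⁻¹' {0}) :=
    (isCompact_closedBall y ρ).of_isClosed_subset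
      ((hw.continuousOn.mono hρB).preimage_isClosed_of_isClosed isClosed_closedBall
        isClosed_singleton) inter_subset_left
  obtain ⟨z₁, ⟨hz₁ρ, hwz₁⟩, hmin⟩ := hZ.exists_isMinOn ⟨z, mem_closedBall.2 le_rfl, hwz⟩
    (continuous_id.dist continuous_const).continuousOn
  have hr : 0 < dist z₁ y := dist_pos.2 fun h => hwy_neg.ne (h ▸ hwz₁)
  have hball : closedBall y (dist z₁ y) ⊆ B := (closedBall_subset_closedBall hz₁ρ).trans hρB
  have hneg : ∀ x ∈ ball y (dist z₁ y), w x < 0 := fun x hx =>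
    (hw_le x (hball (ball_subset_closedBall hx))).lt_of_ne fun h => (mem_ball.1 hx).not_ge <|
      hmin ⟨closedBall_subset_closedBall hz₁ρ (ball_subset_closedBall hx), h⟩
  have hpos := hopf_lemma hr (ha.mono hball) (fun i j => (ha_cont i j).mono hball)
    (fun i => (hb_cont i).mono hball) (hc_cont.mono hball) (fun x hx => hc x (hball hx))
    (fun x hx => hw.contDiffAt (hB.mem_nhds (hball hx)))
    (fun x hx => hLw x (hball (ball_subset_closedBall hx))) (fun x hx => hw_le x (hball hx)) hneg
    rfl hwz₁
  have hmax : IsLocalMax w z₁ :=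
    Filter.mem_of_superset (hB.mem_nhds (hball (mem_closedBall.2 le_rfl))) fun x hx =>
      hwz₁ ▸ hw_le x hx
  simp [hmax.fderiv_eq_zero] at hpos

end EllipticOperator

/-- Interior touching principle: if `L(w) = ∑ aᵢⱼ wᵢⱼ + ∑ bᵢ wᵢ + c w ≥ 0` on a connected
open set `B` with continuous coefficients, `(aᵢⱼ)` symmetric and positive definite,
`w ≤ 0` on `B` and `w(x₀) = 0` at some interior point, then `w ≡ 0` on `B`. -/
theorem interior_touching_principle (n : ℕ) (B : Set (EuclideanSpace ℝ (Fin n)))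
    (hB : IsOpen B) (hBconn : IsConnected B)
    (a : Fin n → Fin n → EuclideanSpace ℝ (Fin n) → ℝ)
    (b : Fin n → EuclideanSpace ℝ (Fin n) → ℝ) (c : EuclideanSpace ℝ (Fin n) → ℝ)
    (hsym : ∀ i j, ∀ x ∈ B, a i j x = a j i x)
    (ha : ∀ i j, ContinuousOn (a i j) B) (hb : ∀ i, ContinuousOn (b i) B)
    (hc : ContinuousOn c B)
    (hell : ∀ x ∈ B, ∀ ξ : EuclideanSpace ℝ (Fin n), ξ ≠ 0 →
      0 < ∑ i, ∑ j, a i j x * ξ i * ξ j)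
    (w : EuclideanSpace ℝ (Fin n) → ℝ) (hw : ContDiffOn ℝ 2 w B)
    (hLw : ∀ x ∈ B,
      0 ≤ ∑ i, ∑ j, a i j x * pd2 w i j x + ∑ i, b i x * pd w i x + c x * w x)
    (hwle : ∀ x ∈ B, w x ≤ 0)
    (x₀ : EuclideanSpace ℝ (Fin n)) (hx₀ : x₀ ∈ B) (hw0 : w x₀ = 0) :
    ∀ x ∈ B, w x = 0 := by
  have hLw' : ∀ x ∈ B, 0 ≤ ellipticOp a b (fun y => min (c y) 0) w x := fun x hx =>
    (hLw x hx).trans (add_le_add_right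
      (mul_le_mul_of_nonpos_right (min_le_left _ _) (hwle x hx)) _)
  set Z := {x ∈ B | w x = 0}
  have hZ_open : IsOpen Z := isOpen_iff_mem_nhds.2 fun z hz =>
    Filter.Eventually.and (hB.mem_nhds hz.1) <|
      eventually_eq_zero_of_eq_zero hB ⟨hsym, hell⟩ ha hb (hc.inf continuousOn_const)
        (fun _ _ => min_le_right _ _) hw hLw' hwle hz.1 hz.2
  have hZ_closed : closure Z ∩ B ⊆ Z := fun x ⟨hxZ, hxB⟩ => by
    have hwx := (hw.continuousOn.continuousAt (hB.mem_nhds hxB)).continuousWithinAt.mem_closure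
      hxZ (t := {0}) fun y hy => hy.2
    exact ⟨hxB, by simpa using hwx⟩
  exact fun x hx => (hBconn.isPreconnected.subset_of_closure_inter_subset hZ_open
    ⟨x₀, hx₀, hx₀, hw0⟩ hZ_closed hx).2
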